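/- Let β₁,…,βₘ be distinct real numbers, λ₁,…,λₙ distinct real numbers, none equal to any β_j, with n ≥ m, and ε ∈ {1,-1}. Define x_j² = -4ε·∏_{k=1}^{n}(β_j-λ_k)/∏_{k≠j}(β_j-β_k) and let a₀=1, a₁,…,a_{n-m} be the unique reals such that ∑_{j=0}^{n-m} z^{n-m-j}a_j - (ε/4)∑_{j=1}^{m} x_j²/(z-β_j) = ∏(z-λ_k)/∏(z-β_k). Then for i = 1,…,n: qᵢ(λ) = ∑_{j=0}^{n-m} ρ_{i-j} a_j + (ε/4)·∑_{j=1}^{m} (∂ρ_{i-(n-m)}/∂β_j)·x_j², where qᵢ(λ) = (-1)ⁱ e_i(λ), ρ_s = (-1)^s e_s(β) with the convention ρ_s = 0 for s < 0 or s > m and ρ₀ = 1. -/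
import Mathlib

open Finset

open Polynomial in
lemma my_prod_X_sub_C_coeff' {σ : Type*} (s : Multiset σ) (r : σ → ℝ) {k : ℕ}
    (h : k ≤ Multiset.card s) :
    (s.map fun i => X - C (r i)).prod.coeff k =
      (-1) ^ (Multiset.card s - k) * (s.map r).esymm (Multiset.card s - k) := by
  erw [← Multiset.map_map (fun x => X - C x) r, Multiset.prod_X_sub_C_coeff] <;>
    rw [s.card_map r]
  exact h

open Polynomial in
lemma my_coeff_prod {ι : Type*} [DecidableEq ι] (t : Finset ι) (f : ι → ℝ) (c : ℕ) :
    (∏ k ∈ t, (X - C (f k))).coeff c =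
      if c ≤ t.card then
        (-1 : ℝ) ^ (t.card - c) * ∑ u ∈ t.powersetCard (t.card - c), ∏ k ∈ u, f k
      else 0 := by
  split_ifs with h
  · rw [Finset.prod, my_prod_X_sub_C_coeff' _ f (by simpa using h), Finset.esymm_map_val]
    simp
  · apply Polynomial.coeff_eq_zero_of_natDegree_lt
    have : (∏ k ∈ t, (X - C (f k))).natDegree = t.card := by
      rw [Polynomial.natDegree_prod_of_monic _ _ (fun i _ => monic_X_sub_C (f i))]
      simp
    omega

theorem stmt14 (n m : ℕ) (hmn : m ≤ n)
    (β : Fin m → ℝ) (hβ : Function.Injective β)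
    (lam : Fin n → ℝ) (hlam : Function.Injective lam)
    (hdisj : ∀ i j, lam i ≠ β j)
    (ε : ℝ) (hε : ε = 1 ∨ ε = -1)
    (xsq : Fin m → ℝ)
    (hx : ∀ j : Fin m, xsq j =
      -4 * ε * (∏ k : Fin n, (β j - lam k))
        / (∏ k ∈ Finset.univ.erase j, (β j - β k)))
    (a : ℕ → ℝ) (ha0 : a 0 = 1)
    (hid : ∀ z : ℝ, (∀ j, z ≠ β j) →
      (∑ j ∈ Finset.range (n - m + 1), z ^ (n - m - j) * a j)
        - ε / 4 * ∑ j : Fin m, xsq j / (z - β j)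
      = (∏ k : Fin n, (z - lam k)) / (∏ k : Fin m, (z - β k)))
    (q : ℕ → ℝ)
    (hq : ∀ i, q i = (-1 : ℝ) ^ i *
      ∑ s ∈ Finset.univ.powersetCard i, ∏ k ∈ s, lam k)
    (ρ : ℤ → ℝ)
    (hρ : ∀ s : ℤ, ρ s =
      if 0 ≤ s ∧ s ≤ (m : ℤ) then
        (-1 : ℝ) ^ s.toNat * ∑ t ∈ Finset.univ.powersetCard s.toNat, ∏ k ∈ t, β k
      else 0)
    (dρ : ℤ → Fin m → ℝ)
    (hdρ : ∀ s : ℤ, ∀ j : Fin m, dρ s j =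
      if 1 ≤ s ∧ s ≤ (m : ℤ) then
        (-1 : ℝ) ^ s.toNat *
          ∑ t ∈ (Finset.univ.erase j).powersetCard (s.toNat - 1), ∏ k ∈ t, β k
      else 0) :
    ∀ i : ℕ, 1 ≤ i → i ≤ n →
      q i = (∑ j ∈ Finset.range (n - m + 1), ρ ((i : ℤ) - (j : ℤ)) * a j)
        + ε / 4 * ∑ j : Fin m, dρ ((i : ℤ) - ((n : ℤ) - (m : ℤ))) j * xsq j := by
  classical
  open Polynomial in
  set d := n - m with hd
  clear_value d
  set B : ℝ[X] := ∏ k : Fin m, (X - C (β k)) with hB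
  set E : Fin m → ℝ[X] := fun j => ∏ k ∈ Finset.univ.erase j, (X - C (β k)) with hE
  set P : ℝ[X] := (∑ j ∈ Finset.range (d + 1), C (a j) * X ^ (d - j)) * B
      - C (ε / 4) * ∑ j : Fin m, C (xsq j) * E j with hP
  set Q : ℝ[X] := ∏ k : Fin n, (X - C (lam k)) with hQ
  have hPQ : P = Q := by
    apply Polynomial.eq_of_infinite_eval_eq
    apply Set.Infinite.mono (s := (Set.range β)ᶜ)
    · intro z hz
      have hzβ : ∀ j, z ≠ β j := by
        intro j hj; exact hz ⟨j, hj.symm⟩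
      have hBz : (∏ k : Fin m, (z - β k)) ≠ 0 := by
        apply Finset.prod_ne_zero_iff.mpr
        intro k _; exact sub_ne_zero_of_ne (hzβ k)
      have key := hid z hzβ
      simp only [Set.mem_setOf_eq, hP, hQ, hB, hE, Polynomial.eval_sub, Polynomial.eval_mul,
        Polynomial.eval_finset_sum, Polynomial.eval_prod, Polynomial.eval_pow,
        Polynomial.eval_X, Polynomial.eval_C]
      have hT : ∀ j : Fin m, xsq j / (z - β j) * (∏ k : Fin m, (z - β k))
          = xsq j * ∏ k ∈ Finset.univ.erase j, (z - β k) := by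
        intro j
        rw [← Finset.mul_prod_erase _ _ (Finset.mem_univ j)]
        have hne : z - β j ≠ 0 := sub_ne_zero_of_ne (hzβ j)
        field_simp
      have hTsum : (∑ j : Fin m, xsq j / (z - β j)) * (∏ k : Fin m, (z - β k))
          = ∑ j : Fin m, xsq j * ∏ k ∈ Finset.univ.erase j, (z - β k) := by
        rw [Finset.sum_mul]; exact Finset.sum_congr rfl fun j _ => hT j
      have hS : (∑ j ∈ Finset.range (d + 1), z ^ (d - j) * a j)
          = ∑ j ∈ Finset.range (d + 1), a j * z ^ (d - j) :=
        Finset.sum_congr rfl fun j _ => mul_comm _ _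
      rw [hS, eq_div_iff hBz] at key
      linear_combination key + (ε / 4) * hTsum
    · exact Set.Infinite.mono (fun x hx => hx) (Set.Finite.infinite_compl (Set.finite_range β))
  intro i hi1 hin
  have hcoeff := congrArg (fun p => Polynomial.coeff p (n - i)) hPQ
  simp only [hP, hQ] at hcoeff
  have hQc : (∏ k : Fin n, (X - C (lam k))).coeff (n - i) = q i := by
    rw [my_coeff_prod, hq i]
    simp only [Finset.card_univ, Fintype.card_fin]
    rw [if_pos (by omega), show n - (n - i) = i by omega]
  rw [hQc] at hcoeff
  rw [← hcoeff]
  rw [Polynomial.coeff_sub, Finset.sum_mul, Polynomial.finset_sum_coeff]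
  have hA : ∑ b ∈ Finset.range (d + 1), (C (a b) * X ^ (d - b) * B).coeff (n - i)
      = ∑ j ∈ Finset.range (d + 1), ρ ((i : ℤ) - (j : ℤ)) * a j := by
    apply Finset.sum_congr rfl
    intro j hj
    have hjd : j ≤ d := by simpa [Nat.lt_succ_iff] using hj
    rw [mul_assoc, Polynomial.coeff_C_mul, mul_comm (X ^ (d - j)) B,
      Polynomial.coeff_mul_X_pow', hρ]
    rw [hB, my_coeff_prod]
    simp only [Finset.card_univ, Fintype.card_fin]
    rw [mul_comm (a j)]
    by_cases h1 : d - j ≤ n - i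
    · rw [if_pos h1]
      by_cases h2 : n - i - (d - j) ≤ m
      · rw [if_pos h2, if_pos (by constructor <;> omega),
          show m - (n - i - (d - j)) = ((i : ℤ) - (j : ℤ)).toNat by omega]
      · rw [if_neg h2, if_neg (by omega)]
    · rw [if_neg h1, if_neg (by omega)]
  have hC2 : (C (ε / 4) * ∑ j : Fin m, C (xsq j) * E j).coeff (n - i)
      = -(ε / 4 * ∑ j : Fin m, dρ ((i : ℤ) - ((n : ℤ) - (m : ℤ))) j * xsq j) := by
    rw [Polynomial.coeff_C_mul, Polynomial.finset_sum_coeff]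
    simp_rw [Polynomial.coeff_C_mul]
    have hterm : ∀ j ∈ (Finset.univ : Finset (Fin m)),
        xsq j * (E j).coeff (n - i)
          = -(dρ ((i : ℤ) - ((n : ℤ) - (m : ℤ))) j * xsq j) := by
      intro j _
      have hmpos : 1 ≤ m := Nat.lt_of_le_of_lt (Nat.zero_le _) j.2
      have hm1 : ((Finset.univ : Finset (Fin m)).erase j).card = m - 1 := by
        rw [Finset.card_erase_of_mem (Finset.mem_univ j)]; simp
      have hEj : E j = ∏ k ∈ Finset.univ.erase j, (X - C (β k)) := rfl
      rw [hEj, my_coeff_prod, hm1, hdρ]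
      by_cases h1 : n - i ≤ m - 1
      · rw [if_pos h1, if_pos (by constructor <;> omega)]
        have hidx : ((i : ℤ) - ((n : ℤ) - (m : ℤ))).toNat - 1 = m - 1 - (n - i) := by omega
        have hexp : ((i : ℤ) - ((n : ℤ) - (m : ℤ))).toNat = (m - 1 - (n - i)) + 1 := by omega
        rw [hidx, hexp, pow_succ]
        ring
      · rw [if_neg h1, if_neg (by omega)]
        ring
    rw [Finset.sum_congr rfl hterm, Finset.sum_neg_distrib]
    ring
  rw [hA, hC2]
  ring
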